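/- Let X ∈ ℝ^{n×m}, Y ∈ ℝ^{n×m}, λ > 0, σ > 0, and U₀ ∈ ℝ^{n×n}. Define f(U, S) = (1/m)‖Y - UX‖_F² + (1/m)Σ_{j} (X_{j*} X_{j*}ᵀ) Σ_i S_{ij} + (1/λ)·(1/2)[n²(2 ln σ - 1) - Σ_{k,l}(ln S_{kl} - S_{kl}/σ²) + ‖U - U₀‖_F²/σ²] over U ∈ ℝ^{n×n} and entrywise-positive S ∈ ℝ^{n×n}. Then f is minimized uniquely at U* = ((1/m)YXᵀ + (1/(2λσ²))U₀)((1/m)XXᵀ + (1/(2λσ²))I)^{-1} and S*_{ij} = 1/((2λ/m) X_{j*}X_{j*}ᵀ + 1/σ²). -/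

import Mathlib

open Matrix

lemma aux18_entry (a c s : ℝ) (ha : 0 < a) (hc : 0 < c) (hs : 0 < s) :
    a * (c / a) - c * Real.log (c / a) ≤ a * s - c * Real.log s ∧
    (s ≠ c / a → a * (c / a) - c * Real.log (c / a) < a * s - c * Real.log s) := by
  have hca : 0 < c / a := div_pos hc ha
  have ht : 0 < s / (c / a) := div_pos hs hca
  have hlog : Real.log (s / (c / a)) = Real.log s - Real.log (c / a) :=
    Real.log_div hs.ne' hca.ne'
  have hval : c * (s / (c / a)) = a * s := by field_simp
  have hac : a * (c / a) = c := by field_simp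
  constructor
  · have h1 := Real.log_le_sub_one_of_pos ht
    rw [hlog] at h1
    have h2 := mul_le_mul_of_nonneg_left h1 hc.le
    rw [mul_sub, mul_sub, hval] at h2
    linarith
  · intro hne
    have hne1 : s / (c / a) ≠ 1 := fun h =>
      hne (by rw [div_eq_one_iff_eq hca.ne'] at h; exact h)
    have h1 := Real.log_lt_sub_one_of_pos ht hne1
    rw [hlog] at h1
    have h2 := mul_lt_mul_of_pos_left h1 hc
    rw [mul_sub, mul_sub, hval] at h2
    linarith

lemma aux18_sum_eq_trace {n m : ℕ} (M N : Matrix (Fin n) (Fin m) ℝ) :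
    ∑ i, ∑ l, M i l * N i l = (M * Nᵀ).trace := by
  simp [Matrix.trace, Matrix.mul_apply, Matrix.diag]

lemma aux18_sq_eq_trace {n m : ℕ} (M : Matrix (Fin n) (Fin m) ℝ) :
    ∑ i, ∑ l, (M i l) ^ 2 = (M * Mᵀ).trace := by
  rw [← aux18_sum_eq_trace]
  simp [sq]

lemma aux18_sq_eq_trace' {n m : ℕ} (M N : Matrix (Fin n) (Fin m) ℝ) :
    ∑ i, ∑ l, (M i l - N i l) ^ 2 = ((M - N) * (M - N)ᵀ).trace := by
  rw [← aux18_sq_eq_trace]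
  simp [Matrix.sub_apply]

lemma aux18_trace_nonneg {n m : ℕ} (M : Matrix (Fin n) (Fin m) ℝ) :
    0 ≤ (M * Mᵀ).trace := by
  rw [← aux18_sq_eq_trace]
  exact Finset.sum_nonneg fun i _ => Finset.sum_nonneg fun l _ => sq_nonneg _

lemma aux18_trace_pos {n m : ℕ} (M : Matrix (Fin n) (Fin m) ℝ) (hM : M ≠ 0) :
    0 < (M * Mᵀ).trace := by
  rw [← aux18_sq_eq_trace]
  obtain ⟨i, j, hij⟩ : ∃ i j, M i j ≠ 0 := by
    by_contra h
    push_neg at h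
    exact hM (Matrix.ext fun i j => h i j)
  refine Finset.sum_pos' (fun i _ => Finset.sum_nonneg fun l _ => sq_nonneg _)
    ⟨i, Finset.mem_univ i, ?_⟩
  refine Finset.sum_pos' (fun l _ => sq_nonneg _) ⟨j, Finset.mem_univ j, ?_⟩
  positivity

lemma aux18_expand_sub {n m : ℕ} (P Q : Matrix (Fin n) (Fin m) ℝ) :
    ((P - Q) * (P - Q)ᵀ).trace
      = (P * Pᵀ).trace - 2 * (P * Qᵀ).trace + (Q * Qᵀ).trace := by
  have h : Q * Pᵀ = (P * Qᵀ)ᵀ := by rw [Matrix.transpose_mul, Matrix.transpose_transpose]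
  rw [Matrix.transpose_sub, Matrix.sub_mul, Matrix.mul_sub, Matrix.mul_sub,
    Matrix.trace_sub, Matrix.trace_sub, Matrix.trace_sub, h, Matrix.trace_transpose]
  ring

lemma aux18_expand_add {n m : ℕ} (P Q : Matrix (Fin n) (Fin m) ℝ) :
    ((P + Q) * (P + Q)ᵀ).trace
      = (P * Pᵀ).trace + 2 * (P * Qᵀ).trace + (Q * Qᵀ).trace := by
  have h : Q * Pᵀ = (P * Qᵀ)ᵀ := by rw [Matrix.transpose_mul, Matrix.transpose_transpose]
  rw [Matrix.transpose_add, Matrix.add_mul, Matrix.mul_add, Matrix.mul_add,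
    Matrix.trace_add, Matrix.trace_add, Matrix.trace_add, h, Matrix.trace_transpose]
  ring


/-- Theorem 6(a): the PAC-Bayes objective
`f(U,S) = (1/m)‖Y - UX‖_F² + (1/m)∑_j (X_{j*}X_{j*}ᵀ) ∑_i S_{ij}
  + (1/λ)(1/2)[n²(2 ln σ - 1) - ∑_{k,l}(ln S_{kl} - S_{kl}/σ²) + ‖U - U₀‖_F²/σ²]`
over `U` and entrywise-positive `S` is uniquely minimized at
`U* = ((1/m)YXᵀ + (1/(2λσ²))U₀)((1/m)XXᵀ + (1/(2λσ²))I)⁻¹` and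
`S*_{ij} = 1/((2λ/m) X_{j*}X_{j*}ᵀ + 1/σ²)`. -/
theorem stmt_18 {n m : ℕ} (hm : 0 < m) (X Y : Matrix (Fin n) (Fin m) ℝ)
    (lam σ : ℝ) (hlam : 0 < lam) (hσ : 0 < σ) (U₀ : Matrix (Fin n) (Fin n) ℝ)
    (f : Matrix (Fin n) (Fin n) ℝ → Matrix (Fin n) (Fin n) ℝ → ℝ)
    (hf : ∀ U S, f U S =
      (1 / (m : ℝ)) * ∑ i, ∑ l, (Y i l - (U * X) i l) ^ 2
        + (1 / (m : ℝ)) * ∑ j, (∑ l, X j l ^ 2) * (∑ i, S i j)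
        + (1 / lam) * (1 / 2) * ((n : ℝ) ^ 2 * (2 * Real.log σ - 1)
            - ∑ k, ∑ l, (Real.log (S k l) - S k l / σ ^ 2)
            + (∑ i, ∑ j, (U i j - U₀ i j) ^ 2) / σ ^ 2))
    (Ustar Sstar : Matrix (Fin n) (Fin n) ℝ)
    (hUstar : Ustar = ((1 / (m : ℝ)) • (Y * Xᵀ) + (1 / (2 * lam * σ ^ 2)) • U₀) *
        ((1 / (m : ℝ)) • (X * Xᵀ) + (1 / (2 * lam * σ ^ 2)) • (1 : Matrix (Fin n) (Fin n) ℝ))⁻¹)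
    (hSstar : Sstar = of fun i j => 1 / ((2 * lam / (m : ℝ)) * (∑ l, X j l ^ 2) + 1 / σ ^ 2)) :
    (∀ i j, 0 < Sstar i j) ∧
      ∀ U S, (∀ i j, 0 < S i j) → (U, S) ≠ (Ustar, Sstar) → f Ustar Sstar < f U S := by
  have hm' : (0 : ℝ) < m := by exact_mod_cast hm
  have hσ2 : (0 : ℝ) < σ ^ 2 := by positivity
  set c : ℝ := 1 / (2 * lam * σ ^ 2) with hc_def
  have hc : 0 < c := by rw [hc_def]; positivity
  set c' : ℝ := 1 / (2 * lam) with hc'_def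
  have hc' : 0 < c' := by rw [hc'_def]; positivity
  have hw : ∀ j : Fin n, 0 ≤ ∑ l, X j l ^ 2 :=
    fun j => Finset.sum_nonneg fun l _ => sq_nonneg _
  set a : Fin n → ℝ := fun j => (∑ l, X j l ^ 2) / m + c with ha_def
  have ha : ∀ j, 0 < a j :=
    fun j => add_pos_of_nonneg_of_pos (div_nonneg (hw j) hm'.le) hc
  have hSs : ∀ i j, Sstar i j = c' / a j := by
    intro i j
    rw [hSstar]
    show (1 : ℝ) / ((2 * lam / (m : ℝ)) * (∑ l, X j l ^ 2) + 1 / σ ^ 2) = c' / a j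
    rw [hc'_def, ha_def, hc_def]
    rw [div_eq_div_iff (by positivity) (by positivity)]
    field_simp
  have hSpos : ∀ i j, 0 < Sstar i j := fun i j => by
    rw [hSs i j]; exact div_pos hc' (ha j)
  refine ⟨hSpos, ?_⟩
  intro U S hS hne
  set A : Matrix (Fin n) (Fin n) ℝ := (1 / (m : ℝ)) • (X * Xᵀ) + c • 1 with hA_def
  set B : Matrix (Fin n) (Fin n) ℝ := (1 / (m : ℝ)) • (Y * Xᵀ) + c • U₀ with hB_def
  have hXH : Xᴴ = Xᵀ := by ext i j; simp
  have hXX : (X * Xᵀ).PosSemidef := by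
    have h := Matrix.posSemidef_self_mul_conjTranspose X
    rwa [hXH] at h
  have hAposdef : A.PosDef := by
    refine Matrix.posDef_iff_dotProduct_mulVec.mpr ⟨?_, ?_⟩
    · show Aᴴ = A
      rw [hA_def]
      simp [Matrix.conjTranspose_add, Matrix.conjTranspose_smul, hXX.1]
    · intro x hx
      have hx0 : 0 < x ⬝ᵥ x := by
        obtain ⟨i, hi⟩ := Function.ne_iff.mp hx
        exact Finset.sum_pos' (fun j _ => mul_self_nonneg _)
          ⟨i, Finset.mem_univ i, mul_self_pos.mpr hi⟩
      have h1 : 0 ≤ x ⬝ᵥ ((X * Xᵀ) *ᵥ x) := by simpa using (Matrix.posSemidef_iff_dotProduct_mulVec.mp hXX).2 x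
      rw [hA_def]
      simp only [Matrix.add_mulVec, Matrix.smul_mulVec, dotProduct_add,
        dotProduct_smul, Matrix.one_mulVec, smul_eq_mul, star_trivial]
      exact add_pos_of_nonneg_of_pos (mul_nonneg (by positivity) h1) (mul_pos hc hx0)
  have hdet : IsUnit A.det := hAposdef.det_pos.ne'.isUnit
  have hUA : Ustar * A = B := by
    rw [hUstar, Matrix.mul_assoc, Matrix.nonsing_inv_mul A hdet, Matrix.mul_one]
  set R : Matrix (Fin n) (Fin m) ℝ := Y - Ustar * X with hR_def
  set E : Matrix (Fin n) (Fin n) ℝ := Ustar - U₀ with hE_def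
  set D : Matrix (Fin n) (Fin n) ℝ := U - Ustar with hD_def
  have hRX : (1 / (m : ℝ)) • (R * Xᵀ) = c • E := by
    have h1 : R * Xᵀ = Y * Xᵀ - Ustar * (X * Xᵀ) := by
      rw [hR_def, Matrix.sub_mul, Matrix.mul_assoc]
    have h2 := hUA
    rw [hA_def, hB_def, Matrix.mul_add, Matrix.mul_smul, Matrix.mul_smul,
      Matrix.mul_one] at h2
    rw [h1, smul_sub, hE_def, smul_sub]
    rw [sub_eq_sub_iff_add_eq_add]
    exact h2.symm.trans (add_comm _ _)
  have cross : (1 / (m : ℝ)) * (R * (D * X)ᵀ).trace = c * (E * Dᵀ).trace := by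
    have h1 : R * (D * X)ᵀ = (R * Xᵀ) * Dᵀ := by
      rw [Matrix.transpose_mul, ← Matrix.mul_assoc]
    have h2 := congrArg (fun M => (M * Dᵀ).trace) hRX
    simpa [Matrix.smul_mul, Matrix.trace_smul, smul_eq_mul, h1, Matrix.mul_assoc] using h2
  -- decomposition of f
  have hdecomp : ∀ (V T : Matrix (Fin n) (Fin n) ℝ), (∀ i j, 0 < T i j) →
      f V T = (1 / (m : ℝ)) * ((Y - V * X) * (Y - V * X)ᵀ).trace
        + c * ((V - U₀) * (V - U₀)ᵀ).trace
        + (∑ k, ∑ l, (a l * T k l - c' * Real.log (T k l)))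
        + (1 / lam) * (1 / 2) * ((n : ℝ) ^ 2 * (2 * Real.log σ - 1)) := by
    intro V T _
    rw [hf]
    rw [← aux18_sq_eq_trace' Y (V * X), ← aux18_sq_eq_trace' V U₀]
    have e1 : ∀ k l, a l * T k l - c' * Real.log (T k l)
        = (∑ l', X l l' ^ 2) / m * T k l
          - c' * (Real.log (T k l) - T k l / σ ^ 2) := by
      intro k l
      rw [ha_def, hc_def, hc'_def]
      have hl : lam ≠ 0 := hlam.ne'
      have hs : σ ≠ 0 := hσ.ne'
      field_simp
      ring
    have e2 : ∑ k, ∑ l, (∑ l', X l l' ^ 2) / (m : ℝ) * T k l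
        = (1 / (m : ℝ)) * ∑ j, (∑ l, X j l ^ 2) * ∑ i, T i j := by
      rw [Finset.sum_comm, Finset.mul_sum]
      refine Finset.sum_congr rfl fun j _ => ?_
      rw [Finset.mul_sum, Finset.mul_sum]
      exact Finset.sum_congr rfl fun k _ => by ring
    have e3 : ∑ k, ∑ l, (a l * T k l - c' * Real.log (T k l))
        = (1 / (m : ℝ)) * ∑ j, (∑ l, X j l ^ 2) * ∑ i, T i j
          - c' * ∑ k, ∑ l, (Real.log (T k l) - T k l / σ ^ 2) := by
      simp only [e1]
      rw [← e2]
      simp only [Finset.sum_sub_distrib, Finset.mul_sum, mul_sub]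
    rw [e3, hc'_def, hc_def]
    have hl : lam ≠ 0 := hlam.ne'
    have hs : σ ≠ 0 := hσ.ne'
    field_simp
    ring_nf
    simp only [mul_comm, mul_left_comm, mul_assoc]
  have hmain : f U S = f Ustar Sstar
      + ((1 / (m : ℝ)) * ((D * X) * (D * X)ᵀ).trace + c * (D * Dᵀ).trace)
      + ∑ k, ∑ l, ((a l * S k l - c' * Real.log (S k l))
          - (a l * Sstar k l - c' * Real.log (Sstar k l))) := by
    rw [hdecomp U S hS, hdecomp Ustar Sstar hSpos]
    have hYU : Y - U * X = R - D * X := by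
      rw [hR_def, hD_def, Matrix.sub_mul]; abel
    have hUU0 : U - U₀ = E + D := by rw [hE_def, hD_def]; abel
    have hYUs : Y - Ustar * X = R := hR_def.symm
    have hUsU0 : Ustar - U₀ = E := hE_def.symm
    rw [hYU, hUU0, hYUs, hUsU0, aux18_expand_sub, aux18_expand_add]
    simp only [Finset.sum_sub_distrib]
    linear_combination (-2 : ℝ) * cross
  -- nonnegativity of pieces
  have hterm : ∀ k l, 0 ≤ (a l * S k l - c' * Real.log (S k l))
      - (a l * Sstar k l - c' * Real.log (Sstar k l)) := by
    intro k l
    have h := (aux18_entry (a l) c' (S k l) (ha l) hc' (hS k l)).1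
    rw [← hSs k l] at h
    linarith
  have hsum_nonneg : 0 ≤ ∑ k, ∑ l, ((a l * S k l - c' * Real.log (S k l))
      - (a l * Sstar k l - c' * Real.log (Sstar k l))) :=
    Finset.sum_nonneg fun k _ => Finset.sum_nonneg fun l _ => hterm k l
  have hg_nonneg : 0 ≤ (1 / (m : ℝ)) * ((D * X) * (D * X)ᵀ).trace + c * (D * Dᵀ).trace :=
    add_nonneg (mul_nonneg (by positivity) (aux18_trace_nonneg _))
      (mul_nonneg hc.le (aux18_trace_nonneg _))
  by_cases hU : U = Ustar
  · -- then S ≠ Sstar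
    have hSne : S ≠ Sstar := by
      intro h
      exact hne (by rw [hU, h])
    obtain ⟨k, l, hkl⟩ : ∃ k l, S k l ≠ Sstar k l := by
      by_contra h
      push_neg at h
      exact hSne (Matrix.ext fun k l => h k l)
    have hpos : 0 < ∑ k, ∑ l, ((a l * S k l - c' * Real.log (S k l))
        - (a l * Sstar k l - c' * Real.log (Sstar k l))) := by
      refine Finset.sum_pos' (fun k _ => Finset.sum_nonneg fun l _ => hterm k l)
        ⟨k, Finset.mem_univ k, ?_⟩
      refine Finset.sum_pos' (fun l _ => hterm k l) ⟨l, Finset.mem_univ l, ?_⟩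
      have h := (aux18_entry (a l) c' (S k l) (ha l) hc' (hS k l)).2
        (by rw [← hSs k l]; exact hkl)
      rw [← hSs k l] at h
      linarith
    linarith [hmain]
  · have hD0 : D ≠ 0 := by
      rw [hD_def]
      exact sub_ne_zero.mpr hU
    have hpos : 0 < (1 / (m : ℝ)) * ((D * X) * (D * X)ᵀ).trace + c * (D * Dᵀ).trace :=
      add_pos_of_nonneg_of_pos (mul_nonneg (by positivity) (aux18_trace_nonneg _))
        (mul_pos hc (aux18_trace_pos D hD0))
    linarith [hmain]
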